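/- arXiv:1207.4366 — 2 statements merged into one kernel-verified Lean document; each statement's English description precedes it below -/
import Mathlib

section
/- Under the hypotheses of the previous setting — F intersection-closed and covered by edge set F₀, U ⊆ F a family of pairwise disjoint bisets with every edge of F₀ having its tail in the inner part of some member of U and |δ_{F₀}(Û)| = 1 for each Û ∈ U, and J ⊆ F₀ covering F[U] — let Ĉ be a core of F^J and let B̂_C be the union of Ĉ with all members of U intersecting Ĉ. Then no edge of F₀ covers B̂_C; consequently B̂_C ∉ F. -/
/-!
Suppose `e ∈ F₀` covered `B̂_C`. Its tail lies in some `Ŵ ∈ U` meeting `Ĉ`, so `e` covers `Ŵ`.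
The biset `Ŵ ∩ Ĉ` lies in `F[U]`, hence is covered by some `f ∈ J`; since `Ĉ` is not covered by `J`,
the head of `f` lies in `C⁺`, so `f` covers `Ŵ` as well. As `Ŵ` has a unique covering edge in `F₀`,
`e = f`, whose head lies in `C⁺ ⊆ B⁺`: a contradiction.
-/

open Set

variable {V : Type*}

/-- A pair `(S, S⁺)` is a biset when `S ⊆ S⁺`. -/
def IsBiset (X : Set V × Set V) : Prop := X.1 ⊆ X.2

/-- An edge `(u,v)` covers biset `(S,S⁺)` if `u ∈ S` and `v ∈ V ∖ S⁺`. -/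
def Covers (e : V × V) (X : Set V × Set V) : Prop := e.1 ∈ X.1 ∧ e.2 ∈ X.2ᶜ

/-- Componentwise intersection of bisets. -/
def bCap (X Y : Set V × Set V) : Set V × Set V := (X.1 ∩ Y.1, X.2 ∩ Y.2)

/-- Componentwise union of bisets. -/
def bCup (X Y : Set V × Set V) : Set V × Set V := (X.1 ∪ Y.1, X.2 ∪ Y.2)

/-- Bisets intersect if their inner parts intersect. -/
def Intersects (X Y : Set V × Set V) : Prop := (X.1 ∩ Y.1).Nonempty

/-- Bisets cross if inner parts intersect and outer parts do not cover `V`. -/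
def Cross (X Y : Set V × Set V) : Prop := (X.1 ∩ Y.1).Nonempty ∧ X.2 ∪ Y.2 ≠ Set.univ

/-- Co-biset of `(S,S⁺)` is `(V∖S⁺, V∖S)`. -/
def coBiset (X : Set V × Set V) : Set V × Set V := (X.2ᶜ, X.1ᶜ)

/-- Crossing biset-family. -/
def CrossingFamily (F : Set (Set V × Set V)) : Prop :=
  ∀ X ∈ F, ∀ Y ∈ F, Cross X Y → bCap X Y ∈ F ∧ bCup X Y ∈ F

/-- Intersecting biset-family. -/
def IntersectingFamily (F : Set (Set V × Set V)) : Prop :=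
  ∀ X ∈ F, ∀ Y ∈ F, Intersects X Y → bCap X Y ∈ F ∧ bCup X Y ∈ F

/-- Intersection-closed biset-family. -/
def IntersectionClosed (F : Set (Set V × Set V)) : Prop :=
  ∀ X ∈ F, ∀ Y ∈ F, Intersects X Y → bCap X Y ∈ F

/-- A biset is covered by some edge of `J`. -/
def CoveredBy (J : Set (V × V)) (X : Set V × Set V) : Prop := ∃ e ∈ J, Covers e X

/-- `J` covers every member of the family `F`. -/
def CoversFamily (J : Set (V × V)) (F : Set (Set V × Set V)) : Prop := ∀ X ∈ F, CoveredBy J X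

/-- Residual family: members of `F` not covered by any edge of `J`. -/
def Residual (F : Set (Set V × Set V)) (J : Set (V × V)) : Set (Set V × Set V) :=
  {X ∈ F | ¬ CoveredBy J X}

/-- Biset containment, componentwise. -/
def bSubset (X Y : Set V × Set V) : Prop := X.1 ⊆ Y.1 ∧ X.2 ⊆ Y.2

/-- A core of `F` : an inclusion-minimal member. -/
def IsCore (F : Set (Set V × Set V)) (C : Set V × Set V) : Prop :=
  C ∈ F ∧ ∀ S ∈ F, bSubset S C → S = C

/-- `F(Ĉ)` : members of `F` containing `Ĉ` and no other core of `F`. -/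
def FamAt (F : Set (Set V × Set V)) (C : Set V × Set V) : Set (Set V × Set V) :=
  {S ∈ F | bSubset C S ∧ ∀ C', IsCore F C' → bSubset C' S → C' = C}

/-- `F[U]` : members of `F` contained in some member of `U`. -/
def FamUnder (F U : Set (Set V × Set V)) : Set (Set V × Set V) :=
  {S ∈ F | ∃ W ∈ U, bSubset S W}

/-- `k`-regular biset-family. -/
def kRegular (k : ℕ) (F : Set (Set V × Set V)) : Prop :=
  ∀ X ∈ F, ∀ Y ∈ F, Intersects X Y → k + 1 ≤ (X.1 ∪ Y.1)ᶜ.ncard →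
    bCap X Y ∈ F ∧ bCup X Y ∈ F

/-- `q`-semi-intersecting biset-family. -/
def qSemiIntersecting (q : ℕ) (S : Set (Set V × Set V)) : Prop :=
  IntersectionClosed S ∧ (∀ X ∈ S, X.1.ncard ≤ q) ∧
  ∀ X ∈ S, ∀ Y ∈ S, Intersects X Y → (X.1 ∪ Y.1).ncard ≤ q → bCup X Y ∈ S

theorem Covers.of_fst_mem_of_snd_subset {e : V × V} {X Y : Set V × Set V} (he : Covers e X)
    (h₁ : e.1 ∈ Y.1) (h₂ : Y.2 ⊆ X.2) : Covers e Y :=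
  ⟨h₁, fun h => he.2 (h₂ h)⟩

theorem Covers.left_of_bCap {f : V × V} {W C : Set V × Set V} (hf : Covers f (bCap W C))
    (hC : f.2 ∈ C.2) : Covers f W :=
  ⟨hf.1.1, fun hW => hf.2 ⟨hW, hC⟩⟩

theorem snd_mem_of_not_coveredBy {J : Set (V × V)} {C : Set V × Set V} {f : V × V}
    (hC : ¬ CoveredBy J C) (hf : f ∈ J) (h₁ : f.1 ∈ C.1) : f.2 ∈ C.2 := by
  by_contra h
  exact hC ⟨f, hf, h₁, h⟩

theorem not_mem_of_forall_not_covers {F : Set (Set V × Set V)} {F₀ : Set (V × V)}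
    {X : Set V × Set V} (hcov : CoversFamily F₀ F) (hX : ∀ e ∈ F₀, ¬ Covers e X) : X ∉ F :=
  fun hXF => by
    obtain ⟨e, he, heX⟩ := hcov X hXF
    exact hX e he heX

theorem bCap_mem_famUnder {F U : Set (Set V × Set V)} {W C : Set V × Set V}
    (hF : IntersectionClosed F) (hUF : U ⊆ F) (hW : W ∈ U) (hC : C ∈ F)
    (hWC : Intersects W C) : bCap W C ∈ FamUnder F U :=
  ⟨hF W (hUF hW) C hC hWC, W, hW, inter_subset_left, inter_subset_left⟩

theorem exists_mem_covers_snd_mem_of_mem_residual {F U : Set (Set V × Set V)} {J : Set (V × V)}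
    {W C : Set V × Set V} (hF : IntersectionClosed F) (hUF : U ⊆ F)
    (hJcov : CoversFamily J (FamUnder F U)) (hC : C ∈ Residual F J) (hW : W ∈ U)
    (hWC : Intersects W C) : ∃ f ∈ J, Covers f W ∧ f.2 ∈ C.2 := by
  obtain ⟨f, hfJ, hf⟩ := hJcov _ (bCap_mem_famUnder hF hUF hW hC.1 hWC)
  have hfC : f.2 ∈ C.2 := snd_mem_of_not_coveredBy hC.2 hfJ hf.1.2
  exact ⟨f, hfJ, hf.left_of_bCap hfC, hfC⟩

/-- The paper's `B̂_C`. -/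
def absorbIntersecting (U : Set (Set V × Set V)) (C : Set V × Set V) : Set V × Set V :=
  (C.1 ∪ ⋃ W ∈ {X ∈ U | Intersects X C}, W.1, C.2 ∪ ⋃ W ∈ {X ∈ U | Intersects X C}, W.2)

theorem snd_subset_absorbIntersecting {U : Set (Set V × Set V)} {W C : Set V × Set V}
    (hW : W ∈ U) (hWC : Intersects W C) : W.2 ⊆ (absorbIntersecting U C).2 :=
  fun _ hx => mem_union_right _ (mem_biUnion ⟨hW, hWC⟩ hx)

theorem exists_mem_of_mem_absorbIntersecting {U : Set (Set V × Set V)} {C : Set V × Set V}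
    {x : V} (hxU : ∃ W ∈ U, x ∈ W.1) (hx : x ∈ (absorbIntersecting U C).1) :
    ∃ W ∈ U, Intersects W C ∧ x ∈ W.1 := by
  rcases hx with hxC | hx
  · obtain ⟨W, hW, hxW⟩ := hxU
    exact ⟨W, hW, ⟨x, hxW, hxC⟩, hxW⟩
  · simp only [mem_iUnion, mem_sep_iff] at hx
    obtain ⟨W, ⟨hW, hWC⟩, hxW⟩ := hx
    exact ⟨W, hW, hWC, hxW⟩

theorem not_covers_absorbIntersecting {F U : Set (Set V × Set V)} {F₀ J : Set (V × V)}
    {C : Set V × Set V} (hF : IntersectionClosed F) (hUF : U ⊆ F)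
    (htail : ∀ e ∈ F₀, ∃ W ∈ U, e.1 ∈ W.1)
    (hunique : ∀ W ∈ U, {e ∈ F₀ | Covers e W}.Subsingleton) (hJ : J ⊆ F₀)
    (hJcov : CoversFamily J (FamUnder F U)) (hC : C ∈ Residual F J) :
    ∀ e ∈ F₀, ¬ Covers e (absorbIntersecting U C) := by
  intro e he heB
  obtain ⟨W, hW, hWC, heW⟩ := exists_mem_of_mem_absorbIntersecting (htail e he) heB.1
  obtain ⟨f, hfJ, hfW, hfC⟩ :=
    exists_mem_covers_snd_mem_of_mem_residual hF hUF hJcov hC hW hWC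
  have hef : e = f := hunique W hW
    ⟨he, heB.of_fst_mem_of_snd_subset heW (snd_subset_absorbIntersecting hW hWC)⟩ ⟨hJ hfJ, hfW⟩
  exact heB.2 (mem_union_left _ (hef ▸ hfC))

theorem stmt_13_general (F U : Set (Set V × Set V)) (F₀ J : Set (V × V))
    (eU : (Set V × Set V) → V × V)
    (hF : IntersectionClosed F)
    (hcov : CoversFamily F₀ F)
    (hUF : U ⊆ F)
    (htail : ∀ e ∈ F₀, ∃ W ∈ U, e.1 ∈ W.1)
    (heU : ∀ W ∈ U, eU W ∈ F₀ ∧ Covers (eU W) W ∧ ∀ e ∈ F₀, Covers e W → e = eU W)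
    (hJ : J ⊆ F₀)
    (hJcov : CoversFamily J (FamUnder F U))
    (C : Set V × Set V) (hC : IsCore (Residual F J) C)
    (B : Set V × Set V)
    (hB : B = (C.1 ∪ ⋃ W ∈ {X ∈ U | Intersects X C}, W.1,
               C.2 ∪ ⋃ W ∈ {X ∈ U | Intersects X C}, W.2)) :
    (∀ e ∈ F₀, ¬ Covers e B) ∧ B ∉ F := by
  have hunique : ∀ W ∈ U, {e ∈ F₀ | Covers e W}.Subsingleton := fun W hW e he f hf =>
    ((heU W hW).2.2 e he.1 he.2).trans ((heU W hW).2.2 f hf.1 hf.2).symm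
  have hB' : B = absorbIntersecting U C := hB
  subst hB'
  have hnot := not_covers_absorbIntersecting hF hUF htail hunique hJ hJcov hC.1
  exact ⟨hnot, not_mem_of_forall_not_covers hcov hnot⟩

theorem stmt_13 (F U : Set (Set V × Set V)) (F₀ J : Set (V × V))
    (eU : (Set V × Set V) → V × V)
    (hF : IntersectionClosed F)
    (hcov : CoversFamily F₀ F)
    (hUF : U ⊆ F)
    (hdisj : ∀ X ∈ U, ∀ Y ∈ U, X ≠ Y → ¬ Intersects X Y)
    (htail : ∀ e ∈ F₀, ∃ W ∈ U, e.1 ∈ W.1)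
    (heU : ∀ W ∈ U, eU W ∈ F₀ ∧ Covers (eU W) W ∧ ∀ e ∈ F₀, Covers e W → e = eU W)
    (hJ : J ⊆ F₀)
    (hJcov : CoversFamily J (FamUnder F U))
    (C : Set V × Set V) (hC : IsCore (Residual F J) C)
    (B : Set V × Set V)
    (hB : B = (C.1 ∪ ⋃ W ∈ {X ∈ U | Intersects X C}, W.1,
               C.2 ∪ ⋃ W ∈ {X ∈ U | Intersects X C}, W.2)) :
    (∀ e ∈ F₀, ¬ Covers e B) ∧ B ∉ F :=
  stmt_13_general F U F₀ J eU hF hcov hUF htail heU hJ hJcov C hC B hB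
end

section
/- Let F be an intersection-closed biset-family on V and let J be a set of directed edges such that for every core Ĉ of F, J covers every member of F(Ĉ) (the bisets of F containing Ĉ and no other core). Then every core of the residual family F^J contains at least two distinct cores of F; hence the number of cores satisfies ν(F^J) ≤ ν(F)/2. -/
open Set

variable {V : Type*}

/-!
A member of the residual family `F^J` containing only one core `Ĉ` of `F` would lie in `F(Ĉ)`
and hence be covered by `J`, so every member of `F^J` contains two distinct cores of `F`.
Conversely, a core `Ĉ` of `F` lies in at most one core of `F^J`: `Ĉ` is covered, so its inner
part is nonempty, and two cores of `F^J` containing it intersect; `F^J` is again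
intersection-closed, so their intersection lies in `F^J` and minimality makes them equal.
Double counting the containments between cores of `F^J` and cores of `F` gives `2 ν(F^J) ≤ ν(F)`.
-/

lemma bSubset_refl (X : Set V × Set V) : bSubset X X := ⟨subset_rfl, subset_rfl⟩

lemma bSubset_trans {X Y Z : Set V × Set V} (h₁ : bSubset X Y) (h₂ : bSubset Y Z) :
    bSubset X Z :=
  ⟨h₁.1.trans h₂.1, h₁.2.trans h₂.2⟩

lemma bSubset_iff_le {X Y : Set V × Set V} : bSubset X Y ↔ X ≤ Y := Prod.le_def.symm

lemma Set.two_mul_ncard_le_ncard_of_forall_two_below {α β : Type*} {A : Set α} {R : Set β}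
    (hA : A.Finite) (r : α → β → Prop)
    (htwo : ∀ b ∈ R, ∃ a₁ a₂, a₁ ∈ A ∧ a₂ ∈ A ∧ a₁ ≠ a₂ ∧ r a₁ b ∧ r a₂ b)
    (hunique : ∀ a ∈ A, ∀ b₁ ∈ R, ∀ b₂ ∈ R, r a b₁ → r a b₂ → b₁ = b₂) :
    2 * R.ncard ≤ A.ncard := by
  classical
  rcases R.finite_or_infinite with hR | hR
  · have hcount : hR.toFinset.card * 2 ≤ hA.toFinset.card * 1 := by
      refine Finset.card_mul_le_card_mul' r (fun b hb => ?_) (fun a ha => ?_)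
      · obtain ⟨a₁, a₂, ha₁, ha₂, hne, hr₁, hr₂⟩ := htwo b (by simpa using hb)
        exact Finset.one_lt_card.mpr ⟨a₁, by simp [ha₁, hr₁], a₂, by simp [ha₂, hr₂], hne⟩
      · refine Finset.card_le_one.mpr fun b₁ hb₁ b₂ hb₂ => ?_
        simp only [Finset.mem_bipartiteAbove, Finite.mem_toFinset] at hb₁ hb₂
        exact hunique a (by simpa using ha) b₁ hb₁.1 b₂ hb₂.1 hb₁.2 hb₂.2
    rw [ncard_eq_toFinset_card R hR, ncard_eq_toFinset_card A hA]
    omega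
  · simp [hR.ncard]

section

variable {F : Set (Set V × Set V)} {J : Set (V × V)} {X Y C : Set V × Set V}

lemma exists_isCore_bSubset [Finite V] (hX : X ∈ F) : ∃ C, IsCore F C ∧ bSubset C X := by
  obtain ⟨C, ⟨hCF, hCX⟩, hmin⟩ :=
    (toFinite {S ∈ F | bSubset S X}).exists_minimal ⟨X, hX, bSubset_refl X⟩
  refine ⟨C, ⟨hCF, fun S hS hSC => ?_⟩, hCX⟩
  exact (bSubset_iff_le.mp hSC).antisymm
    (hmin ⟨hS, bSubset_trans hSC hCX⟩ (bSubset_iff_le.mp hSC))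

lemma IsCore.mem_famAt (hC : IsCore F C) : C ∈ FamAt F C :=
  ⟨hC.1, bSubset_refl C, fun _ hC' hsub => hC.2 _ hC'.1 hsub⟩

lemma CoveredBy.inner_nonempty (h : CoveredBy J X) : X.1.Nonempty :=
  let ⟨e, _, he, _⟩ := h
  ⟨e.1, he⟩

lemma not_coveredBy_bCap (hX : ¬ CoveredBy J X) (hY : ¬ CoveredBy J Y) :
    ¬ CoveredBy J (bCap X Y) := by
  rintro ⟨e, heJ, ⟨heX, heY⟩, he₂⟩
  rcases not_and_or.mp (he₂ : e.2 ∉ X.2 ∩ Y.2) with h | h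
  · exact hX ⟨e, heJ, heX, h⟩
  · exact hY ⟨e, heJ, heY, h⟩

lemma IntersectionClosed.residual (hF : IntersectionClosed F) :
    IntersectionClosed (Residual F J) :=
  fun _ hX _ hY hXY => ⟨hF _ hX.1 _ hY.1 hXY, not_coveredBy_bCap hX.2 hY.2⟩

lemma IntersectionClosed.isCore_eq_of_intersects (hF : IntersectionClosed F) {D : Set V × Set V}
    (hC : IsCore F C) (hD : IsCore F D) (hCD : Intersects C D) : C = D := by
  have hcap : bCap C D ∈ F := hF _ hC.1 _ hD.1 hCD
  calc C = bCap C D := (hC.2 _ hcap ⟨inter_subset_left, inter_subset_left⟩).symm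
    _ = D := hD.2 _ hcap ⟨inter_subset_right, inter_subset_right⟩

lemma exists_two_isCore_of_mem_residual [Finite V]
    (hJ : ∀ C, IsCore F C → CoversFamily J (FamAt F C)) (hX : X ∈ Residual F J) :
    ∃ C₁ C₂, IsCore F C₁ ∧ IsCore F C₂ ∧ C₁ ≠ C₂ ∧ bSubset C₁ X ∧ bSubset C₂ X := by
  obtain ⟨C₁, hC₁, hC₁X⟩ := exists_isCore_bSubset hX.1
  by_contra! h
  have hXfam : X ∈ FamAt F C₁ :=
    ⟨hX.1, hC₁X, fun C₂ hC₂ hC₂X => by_contra fun hne => h C₁ C₂ hC₁ hC₂ (Ne.symm hne) hC₁X hC₂X⟩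
  exact hX.2 (hJ C₁ hC₁ X hXfam)

lemma isCore_residual_eq_of_bSubset (hF : IntersectionClosed F) (hC : C.1.Nonempty)
    {C₁ C₂ : Set V × Set V} (hC₁ : IsCore (Residual F J) C₁) (hC₂ : IsCore (Residual F J) C₂)
    (h₁ : bSubset C C₁) (h₂ : bSubset C C₂) : C₁ = C₂ :=
  let ⟨x, hx⟩ := hC
  hF.residual.isCore_eq_of_intersects hC₁ hC₂ ⟨x, h₁.1 hx, h₂.1 hx⟩

end

theorem stmt_14 [Fintype V] (F : Set (Set V × Set V)) (J : Set (V × V))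
    (hF : IntersectionClosed F)
    (hJ : ∀ C, IsCore F C → CoversFamily J (FamAt F C)) :
    (∀ C', IsCore (Residual F J) C' →
      ∃ C₁ C₂, IsCore F C₁ ∧ IsCore F C₂ ∧ C₁ ≠ C₂ ∧ bSubset C₁ C' ∧ bSubset C₂ C') ∧
    2 * {C | IsCore (Residual F J) C}.ncard ≤ {C | IsCore F C}.ncard := by
  have htwo : ∀ C', IsCore (Residual F J) C' →
      ∃ C₁ C₂, IsCore F C₁ ∧ IsCore F C₂ ∧ C₁ ≠ C₂ ∧ bSubset C₁ C' ∧ bSubset C₂ C' :=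
    fun _ hC' => exists_two_isCore_of_mem_residual hJ hC'.1
  refine ⟨htwo, two_mul_ncard_le_ncard_of_forall_two_below (toFinite _) bSubset htwo ?_⟩
  exact fun C hC _ hC₁ _ hC₂ =>
    isCore_residual_eq_of_bSubset hF (hJ C hC C hC.mem_famAt).inner_nonempty hC₁ hC₂
end
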